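/- With η as defined in the previous statement, if d is 2-intrinsic with bound 1 (i.e. (1/μ(x)) ∑_y ω(x,y) d²(x,y) ≤ 1 for all x), then ∑_{y∈G} (η(y) - η(x))² ω(x,y) ≤ μ(x)/(δ²R²) · 𝟙_{{(1-δ)R - 2s ≤ d(x,x₀) ≤ R}} for all x ∈ G. -/

import Mathlib

/-!
The cutoff is `1/(δR)`-Lipschitz as a function of `d(x₀, ·)`, and by the triangle inequality
`|d(x₀,y) - d(x₀,x)| ≤ d(x,y)`, so each term of the energy is at most
`ω(x,y) d(x,y)² / (δR)²`; 2-intrinsicness bounds the sum by `μ(x)/(δR)²`. Since the neighbours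
of `x` lie within `s` of it, the cutoff is constant (`1` or `0`) on them unless
`(1-δ)R - 2s ≤ d(x,x₀) ≤ R`.
-/

/-- The paper's `η` is `rampDown (R - s) (δ * R) (d x₀ ·)`. -/
noncomputable def rampDown (a c t : ℝ) : ℝ := min (max (a - t) 0 / c) 1

lemma abs_rampDown_sub_le {a c : ℝ} (hc : 0 < c) (t t' : ℝ) :
    |rampDown a c t' - rampDown a c t| ≤ |t' - t| / c := by
  calc |rampDown a c t' - rampDown a c t|
      ≤ max |max (a - t') 0 / c - max (a - t) 0 / c| |(1 : ℝ) - 1| :=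
        abs_min_sub_min_le_max (max (a - t') 0 / c) 1 (max (a - t) 0 / c) 1
    _ = |max (a - t') 0 - max (a - t) 0| / c := by
        rw [sub_self, abs_zero, div_sub_div_same, abs_div, abs_of_pos hc]
        exact max_eq_left (by positivity)
    _ ≤ |(a - t') - (a - t)| / c :=
        div_le_div_of_nonneg_right (abs_max_sub_max_le_abs _ _ _) hc.le
    _ = |t' - t| / c := by rw [sub_sub_sub_cancel_left, abs_sub_comm]

lemma rampDown_of_le_sub {a c t : ℝ} (hc : 0 < c) (ht : t ≤ a - c) : rampDown a c t = 1 := by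
  rw [rampDown, min_eq_right]
  rw [le_div_iff₀ hc, one_mul]
  exact le_max_of_le_left (by linarith)

lemma rampDown_of_le {a c t : ℝ} (ht : a ≤ t) : rampDown a c t = 0 := by
  rw [rampDown, max_eq_right (by linarith), zero_div, min_eq_left zero_le_one]

lemma rampDown_eq_of_abs_sub_le {a c s t t' : ℝ} (hc : 0 < c) (hs : 0 ≤ s) (h : |t' - t| ≤ s)
    (ht : t < a - c - s ∨ a + s < t) : rampDown a c t' = rampDown a c t := by
  obtain ⟨h₁, h₂⟩ := abs_le.mp h
  rcases ht with ht | ht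
  · rw [rampDown_of_le_sub hc (by linarith), rampDown_of_le_sub hc (by linarith)]
  · rw [rampDown_of_le (by linarith), rampDown_of_le (by linarith)]

lemma abs_sub_le_of_triangle {G : Type*} {d : G → G → ℝ} (hd_symm : ∀ x y, d x y = d y x)
    (hd_tri : ∀ x y z, d x y ≤ d x z + d z y) (z x y : G) : |d z y - d z x| ≤ d x y := by
  have h₁ := hd_tri z y x
  have h₂ := hd_tri z x y
  rw [hd_symm y x] at h₂
  exact abs_sub_le_iff.mpr ⟨by linarith, by linarith⟩

section Energy

variable {G : Type*} {ω d : G → G → ℝ} {η : G → ℝ} {x : G}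

lemma tsum_sq_sub_mul_le (hω : ∀ y, 0 ≤ ω x y) (hsum : Summable fun y => ω x y * d x y ^ 2)
    {L : ℝ} (hη : ∀ y, 0 < ω x y → |η y - η x| ≤ L * d x y) :
    ∑' y, (η y - η x) ^ 2 * ω x y ≤ L ^ 2 * ∑' y, ω x y * d x y ^ 2 := by
  have hle : ∀ y, (η y - η x) ^ 2 * ω x y ≤ L ^ 2 * (ω x y * d x y ^ 2) := by
    intro y
    rcases (hω y).eq_or_lt with h | h
    · simp [← h]
    · calc (η y - η x) ^ 2 * ω x y = |η y - η x| ^ 2 * ω x y := by rw [sq_abs]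
        _ ≤ (L * d x y) ^ 2 * ω x y := by gcongr; exact hη y h
        _ = L ^ 2 * (ω x y * d x y ^ 2) := by ring
  have hnonneg : ∀ y, 0 ≤ (η y - η x) ^ 2 * ω x y :=
    fun y => mul_nonneg (sq_nonneg _) (hω y)
  rw [← tsum_mul_left]
  exact (hsum.mul_left _).of_nonneg_of_le hnonneg hle |>.tsum_le_tsum hle (hsum.mul_left _)

lemma tsum_sq_sub_mul_eq_zero (hη : ∀ y, ω x y ≠ 0 → η y = η x) :
    ∑' y, (η y - η x) ^ 2 * ω x y = 0 := by
  refine (tsum_congr fun y => ?_).trans tsum_zero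
  by_cases h : ω x y = 0
  · rw [h, mul_zero]
  · rw [hη y h, sub_self, zero_pow two_ne_zero, zero_mul]

end Energy

theorem stmt12_general {G : Type*}
    (ω : G → G → ℝ) (μ : G → ℝ) (d : G → G → ℝ)
    (hω_nonneg : ∀ x y, 0 ≤ ω x y)
    (hd_symm : ∀ x y, d x y = d y x)
    (hd_tri : ∀ x y z, d x y ≤ d x z + d z y)
    (s : ℝ) (hs : 0 ≤ s) (hjump : ∀ x y, 0 < ω x y → d x y ≤ s)
    (hwsum : ∀ x, Summable fun y => ω x y * (d x y)^2)
    (hintr : ∀ x, ∑' y, ω x y * (d x y)^2 ≤ μ x)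
    (x₀ : G) (R δ : ℝ) (hR : 0 < R) (hδ : 0 < δ)
    (η : G → ℝ) (hη : ∀ x, η x = min (max (R - s - d x₀ x) 0 / (δ * R)) 1) :
    ∀ x : G,
      ∑' y, (η y - η x)^2 * ω x y ≤
        μ x / (δ^2 * R^2) *
          (if (1 - δ) * R - 2 * s ≤ d x x₀ ∧ d x x₀ ≤ R then 1 else 0) := by
  intro x
  have hc : 0 < δ * R := mul_pos hδ hR
  have hη_ramp : ∀ y, η y = rampDown (R - s) (δ * R) (d x₀ y) := hη
  split_ifs with hind
  · have hlip : ∀ y, 0 < ω x y → |η y - η x| ≤ (δ * R)⁻¹ * d x y := fun y _ => by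
      rw [hη_ramp, hη_ramp, inv_mul_eq_div]
      exact (abs_rampDown_sub_le hc _ _).trans
        (by gcongr; exact abs_sub_le_of_triangle hd_symm hd_tri x₀ x y)
    calc ∑' y, (η y - η x) ^ 2 * ω x y
        ≤ (δ * R)⁻¹ ^ 2 * ∑' y, ω x y * d x y ^ 2 :=
          tsum_sq_sub_mul_le (hω_nonneg x) (hwsum x) hlip
      _ ≤ (δ * R)⁻¹ ^ 2 * μ x := by gcongr; exact hintr x
      _ = μ x / (δ ^ 2 * R ^ 2) * 1 := by ring
  · rw [mul_zero, tsum_sq_sub_mul_eq_zero]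
    intro y hy
    rw [hη_ramp, hη_ramp]
    refine rampDown_eq_of_abs_sub_le hc hs ((abs_sub_le_of_triangle hd_symm hd_tri x₀ x y).trans
      (hjump x y ((hω_nonneg x y).lt_of_ne' hy))) ?_
    rw [hd_symm x₀ x]
    rcases not_and_or.mp hind with h | h
    · left; linarith
    · right; linarith

theorem stmt12 {G : Type*} [Countable G]
    (ω : G → G → ℝ) (μ : G → ℝ) (d : G → G → ℝ)
    (hω_nonneg : ∀ x y, 0 ≤ ω x y)
    (hω_symm : ∀ x y, ω x y = ω y x)
    (hω_diag : ∀ x, ω x x = 0)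
    (hμ : ∀ x, 0 < μ x)
    (hd_self : ∀ x, d x x = 0)
    (hd_symm : ∀ x y, d x y = d y x)
    (hd_tri : ∀ x y z, d x y ≤ d x z + d z y)
    (s : ℝ) (hs : 0 ≤ s) (hjump : ∀ x y, 0 < ω x y → d x y ≤ s)
    (hwsum : ∀ x, Summable fun y => ω x y * (d x y)^2)
    (hintr : ∀ x, ∑' y, ω x y * (d x y)^2 ≤ μ x)
    (x₀ : G) (R δ : ℝ) (hR : 0 < R) (hδ : 0 < δ) (hδ1 : δ < 1)
    (η : G → ℝ) (hη : ∀ x, η x = min (max (R - s - d x₀ x) 0 / (δ * R)) 1) :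
    ∀ x : G,
      ∑' y, (η y - η x)^2 * ω x y ≤
        μ x / (δ^2 * R^2) *
          (if (1 - δ) * R - 2 * s ≤ d x x₀ ∧ d x x₀ ≤ R then 1 else 0) :=
  stmt12_general ω μ d hω_nonneg hd_symm hd_tri s hs hjump hwsum hintr x₀ R δ hR hδ η hη
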